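/- arXiv:1810.06713 — 3 statements merged into one kernel-verified Lean document; each statement's English description precedes it below -/
import Mathlib

section
/- For k ≥ 1 and c_1 > 1, the polynomial P_k(x) = 1 − T_k(c_1(1−x))/T_k(c_1) satisfies P_k(0) = 0 and P_k(λ) > 0 for every λ ∈ [1 − 1/c_1, 1 + 1/c_1]. -/
/-- Chebyshev polynomials of the first kind. -/
def cheb : ℕ → ℝ → ℝ
  | 0, _ => 1
  | 1, x => x
  | (k + 2), x => 2 * x * cheb (k + 1) x - cheb k x

lemma chebCos (θ : ℝ) : ∀ k : ℕ, cheb k (Real.cos θ) = Real.cos (k * θ)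
  | 0 => by simp [cheb]
  | 1 => by simp [cheb]
  | (k + 2) => by
      have h1 := chebCos θ (k + 1)
      have h0 := chebCos θ k
      have e1 : ((k : ℝ) + 2) * θ = ((k + 1 : ℝ) * θ) + θ := by ring
      have e0 : (k : ℝ) * θ = ((k + 1 : ℝ) * θ) - θ := by ring
      simp only [cheb, h1, h0]
      push_cast
      rw [e1, e0, Real.cos_add, Real.cos_sub]
      ring

lemma chebBound {x : ℝ} (hx : |x| ≤ 1) (k : ℕ) : |cheb k x| ≤ 1 := by
  have hx' : -1 ≤ x ∧ x ≤ 1 := abs_le.mp hx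
  have : x = Real.cos (Real.arccos x) := (Real.cos_arccos hx'.1 hx'.2).symm
  rw [this, chebCos]
  exact Real.abs_cos_le_one _

lemma chebGrow {x : ℝ} (hx : 1 < x) :
    ∀ k : ℕ, cheb k x ≤ cheb (k + 1) x ∧ 1 ≤ cheb k x ∧ x ≤ cheb (k + 1) x := by
  intro k
  induction k with
  | zero =>
    refine ⟨?_, le_refl 1, le_refl x⟩
    show (1:ℝ) ≤ x
    exact le_of_lt hx
  | succ n ih =>
    obtain ⟨h1, h2, h3⟩ := ih
    have hx1 : (1:ℝ) ≤ cheb (n+1) x := le_trans h2 h1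
    have hstep : cheb (n + 1) x ≤ cheb (n + 2) x := by
      have : cheb (n + 2) x = 2 * x * cheb (n+1) x - cheb n x := rfl
      rw [this]
      nlinarith
    exact ⟨hstep, hx1, le_trans h3 hstep⟩

/-- For k ≥ 1 and c₁ > 1, the polynomial
P_k(x) = 1 − T_k(c₁(1−x))/T_k(c₁) satisfies P_k(0) = 0 and P_k(λ) > 0 for every
λ ∈ [1 − 1/c₁, 1 + 1/c₁]. -/
theorem stmt3 (k : ℕ) (hk : 1 ≤ k) (c₁ : ℝ) (hc₁ : 1 < c₁)
    (P : ℝ → ℝ) (hP : ∀ x, P x = 1 - cheb k (c₁ * (1 - x)) / cheb k c₁) :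
    P 0 = 0 ∧ ∀ lam ∈ Set.Icc (1 - 1 / c₁) (1 + 1 / c₁), 0 < P lam := by
  have hT : 1 < cheb k c₁ := by
    obtain ⟨m, rfl⟩ := Nat.exists_eq_add_of_le' hk
    exact lt_of_lt_of_le hc₁ (chebGrow hc₁ m).2.2
  have hTpos : 0 < cheb k c₁ := lt_trans one_pos hT
  constructor
  · rw [hP]
    simp [div_self (ne_of_gt hTpos)]
  · intro lam hlam
    obtain ⟨hl, hr⟩ := hlam
    have hc₁pos : 0 < c₁ := lt_trans one_pos hc₁
    have habs : |c₁ * (1 - lam)| ≤ 1 := by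
      have hinv : c₁ * (1 / c₁) = 1 := mul_one_div_cancel (ne_of_gt hc₁pos)
      rw [abs_le]
      constructor <;> nlinarith [mul_le_mul_of_nonneg_left hl (le_of_lt hc₁pos),
        mul_le_mul_of_nonneg_left hr (le_of_lt hc₁pos)]
    have hb := chebBound habs k
    have hlt : cheb k (c₁ * (1 - lam)) < cheb k c₁ :=
      lt_of_le_of_lt (le_trans (le_abs_self _) hb) hT
    rw [hP]
    have : cheb k (c₁ * (1 - lam)) / cheb k c₁ < 1 := (div_lt_one hTpos).mpr hlt
    linarith
end

section
/- Let L be a real symmetric positive semidefinite n×n matrix whose kernel is exactly span{1_n}, with second smallest eigenvalue λ_2 > 0 and largest eigenvalue λ_n > λ_2. Define c_1 = (1 + λ_2/λ_n)/(1 − λ_2/λ_n), c_2 = 2/((1 + λ_2/λ_n)·λ_n), and P_k(x) = 1 − T_k(c_1(1−x))/T_k(c_1) for k ≥ 1. Then the kernel of the matrix P_k(c_2·L) equals span{1_n}. -/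
/-!
With p(x) = 1 - T_k(c₁(1 - c₂x)) / T_k(c₁), the matrix P_k(c₂L) is p(L) in the continuous
functional calculus of the symmetric matrix L. Clearly p(0) = 0. For x ∈ [λ₂, λₙ] the argument
c₁(1 - c₂x) lies in [-1, 1], where |T_k| ≤ 1 < T_k(c₁) since c₁ > 1 and k ≥ 1, so p(x) ≠ 0.
Thus p and the identity vanish at the same points of the (finite) spectrum of L; each is then a
multiple of the other on the spectrum, so p(L) and L have the same kernel, namely span{1}.
-/

def chebR {R : Type*} [Ring R] : ℕ → R → R
  | 0, _ => 1
  | 1, x => x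
  | (k + 2), x => 2 * x * chebR (k + 1) x - chebR k x

open Matrix Polynomial Polynomial.Chebyshev Set

theorem chebR_eq_aeval {R A : Type*} [CommRing R] [Ring A] [Algebra R A] (k : ℕ) (x : A) :
    chebR k x = aeval x (T R k) := by
  induction k, x using chebR.induct with
  | case1 => simp [chebR]
  | case2 => simp [chebR]
  | case3 k x ih₁ ih₀ =>
    rw [chebR, ih₁, ih₀, show ((k + 2 : ℕ) : ℤ) = k + 2 by push_cast; ring, T_add_two]
    simp [mul_assoc, map_ofNat]

theorem chebR_eq_eval {R : Type*} [CommRing R] (k : ℕ) (x : R) : chebR k x = (T R k).eval x := by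
  rw [chebR_eq_aeval (R := R), coe_aeval_eq_eval]

theorem cfc_one_sub_mul_chebR {A : Type*} {p : A → Prop} [Ring A] [StarRing A] [Algebra ℝ A]
    [TopologicalSpace A] [ContinuousFunctionalCalculus ℝ A p] (a : A) (ha : p a)
    (k : ℕ) (s c d : ℝ) :
    cfc (fun x => 1 - s * chebR k (c * (1 - d * x))) a = 1 - s • chebR k (c • (1 - d • a)) := by
  set q : ℝ[X] := 1 - C s * (T ℝ k).comp (C c * (1 - C d * X))
  have hq : (fun x => 1 - s * chebR k (c * (1 - d * x))) = q.eval := by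
    funext x; simp [q, chebR_eq_eval]
  rw [hq, cfc_polynomial q a ha]
  simp [q, aeval_comp, chebR_eq_aeval (R := ℝ), Algebra.smul_def]

namespace Matrix

theorem exists_mulVec_eq_smul_of_mem_spectrum {n K : Type*} [Fintype n] [DecidableEq n]
    [Field K] {A : Matrix n n K} {μ : K} (hμ : μ ∈ spectrum K A) :
    ∃ v, v ≠ 0 ∧ A *ᵥ v = μ • v := by
  rw [← spectrum_toLin', ← Module.End.hasEigenvalue_iff_mem_spectrum] at hμ
  obtain ⟨v, hv⟩ := hμ.exists_hasEigenvector
  exact ⟨v, hv.2, by simpa using hv.apply_eq_smul⟩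

variable {𝕜 n : Type*} [RCLike 𝕜] [Fintype n] [DecidableEq n] {A : Matrix n n 𝕜}

theorem cfc_mulVec_eq_zero_of_cfc_mulVec_eq_zero {f g : ℝ → ℝ}
    (hfg : ∀ x ∈ spectrum ℝ A, g x = 0 → f x = 0) {v : n → 𝕜} (hv : cfc g A *ᵥ v = 0) :
    cfc f A *ᵥ v = 0 := by
  have hfin := A.finite_real_spectrum
  -- every function is continuous on the finite spectrum, so `f / g` is admissible
  have hfactor : cfc f A = cfc (fun x => f x / g x) A * cfc g A := by
    rw [← cfc_mul _ _ A (hfin.continuousOn _) (hfin.continuousOn _)]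
    refine cfc_congr fun x hx => ?_
    by_cases hgx : g x = 0
    · simp [hgx, hfg x hx hgx]
    · field_simp
  rw [hfactor, ← mulVec_mulVec, hv, mulVec_zero]

theorem IsHermitian.cfc_mulVec_eq_zero_iff (hA : A.IsHermitian) {f : ℝ → ℝ}
    (hf : ∀ x ∈ spectrum ℝ A, f x = 0 ↔ x = 0) (v : n → 𝕜) :
    cfc f A *ᵥ v = 0 ↔ A *ᵥ v = 0 := by
  nth_rw 2 [← cfc_id' ℝ A hA.isSelfAdjoint]
  exact ⟨cfc_mulVec_eq_zero_of_cfc_mulVec_eq_zero fun x hx => (hf x hx).1,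
    cfc_mulVec_eq_zero_of_cfc_mulVec_eq_zero fun x hx => (hf x hx).2⟩

end Matrix

theorem one_lt_one_add_div_one_sub {r : ℝ} (h₀ : 0 < r) (h₁ : r < 1) :
    1 < (1 + r) / (1 - r) := by
  rw [lt_div_iff₀ (by linarith)]; linarith

-- the map is `x ↦ (u + l - 2x) / (u - l)`, which sends `[l, u]` onto `[-1, 1]`
theorem affine_rescale_mem_Icc {l u x : ℝ} (hl : 0 < l) (hlu : l < u) (hx : x ∈ Icc l u) :
    (1 + l / u) / (1 - l / u) * (1 - 2 / ((1 + l / u) * u) * x) ∈ Icc (-1) 1 := by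
  have hu : 0 < u := hl.trans hlu
  have hform : (1 + l / u) / (1 - l / u) * (1 - 2 / ((1 + l / u) * u) * x)
      = (u + l - 2 * x) / (u - l) := by
    field_simp
  rw [hform, mem_Icc, le_div_iff₀ (by linarith), div_le_one (by linarith)]
  constructor <;> linarith [hx.1, hx.2]

theorem stmt6_general {n : ℕ} (L : Matrix (Fin n) (Fin n) ℝ)
    (hsymm : L.IsSymm)
    (hker : ∀ v : Fin n → ℝ, L.mulVec v = 0 ↔ ∃ a : ℝ, v = fun _ => a)
    (lam2 lamn : ℝ) (h2 : 0 < lam2) (h2n : lam2 < lamn)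
    (heig : ∀ μ : ℝ, (∃ v : Fin n → ℝ, v ≠ 0 ∧ L.mulVec v = μ • v) →
      μ = 0 ∨ (lam2 ≤ μ ∧ μ ≤ lamn))
    (c₁ c₂ : ℝ)
    (hc₁ : c₁ = (1 + lam2 / lamn) / (1 - lam2 / lamn))
    (hc₂ : c₂ = 2 / ((1 + lam2 / lamn) * lamn))
    (k : ℕ) (hk : 1 ≤ k)
    (PkL : Matrix (Fin n) (Fin n) ℝ)
    (hPkL : PkL = (1 : Matrix (Fin n) (Fin n) ℝ)
      - (chebR k c₁)⁻¹ • chebR k (c₁ • ((1 : Matrix (Fin n) (Fin n) ℝ) - c₂ • L))) :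
    ∀ v : Fin n → ℝ, PkL.mulVec v = 0 ↔ ∃ a : ℝ, v = fun _ => a := by
  have hL : L.IsHermitian := isHermitian_iff_isSymm.mpr hsymm
  have hlamn : 0 < lamn := h2.trans h2n
  have hTc₁ : 1 < chebR k c₁ := by
    rw [chebR_eq_eval, hc₁]
    exact one_lt_eval_T_real (by omega)
      (one_lt_one_add_div_one_sub (div_pos h2 hlamn) ((div_lt_one hlamn).mpr h2n))
  have hTc₁₀ : chebR k c₁ ≠ 0 := (one_pos.trans hTc₁).ne'
  have hzero : ∀ x ∈ spectrum ℝ L,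
      1 - (chebR k c₁)⁻¹ * chebR k (c₁ * (1 - c₂ * x)) = 0 ↔ x = 0 := by
    intro x hx
    rcases heig x (exists_mulVec_eq_smul_of_mem_spectrum hx) with rfl | hmem
    · simp [inv_mul_cancel₀ hTc₁₀]
    · refine iff_of_false (fun h => ?_) (by linarith [hmem.1])
      have hle : chebR k (c₁ * (1 - c₂ * x)) ≤ 1 := by
        rw [chebR_eq_eval, hc₁, hc₂]
        exact (eval_T_real_mem_Icc k (affine_rescale_mem_Icc h2 h2n hmem)).2
      rw [sub_eq_zero, eq_comm, inv_mul_eq_one₀ hTc₁₀] at h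
      linarith
  intro v
  rw [hPkL, ← cfc_one_sub_mul_chebR L hL.isSelfAdjoint, hL.cfc_mulVec_eq_zero_iff hzero, hker]

/-- Let L be a real symmetric PSD n×n matrix with kernel exactly span{1ₙ},
second smallest eigenvalue λ₂ > 0 and largest eigenvalue λₙ > λ₂.  With
c₁ = (1 + λ₂/λₙ)/(1 − λ₂/λₙ), c₂ = 2/((1 + λ₂/λₙ)·λₙ) and
P_k(x) = 1 − T_k(c₁(1−x))/T_k(c₁) (k ≥ 1), the kernel of P_k(c₂·L) equals span{1ₙ}. -/
theorem stmt6 {n : ℕ} (L : Matrix (Fin n) (Fin n) ℝ)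
    (hsymm : L.IsSymm) (hpsd : L.PosSemidef)
    (hker : ∀ v : Fin n → ℝ, L.mulVec v = 0 ↔ ∃ a : ℝ, v = fun _ => a)
    (lam2 lamn : ℝ) (h2 : 0 < lam2) (h2n : lam2 < lamn)
    (heig : ∀ μ : ℝ, (∃ v : Fin n → ℝ, v ≠ 0 ∧ L.mulVec v = μ • v) →
      μ = 0 ∨ (lam2 ≤ μ ∧ μ ≤ lamn))
    (c₁ c₂ : ℝ)
    (hc₁ : c₁ = (1 + lam2 / lamn) / (1 - lam2 / lamn))
    (hc₂ : c₂ = 2 / ((1 + lam2 / lamn) * lamn))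
    (k : ℕ) (hk : 1 ≤ k)
    (PkL : Matrix (Fin n) (Fin n) ℝ)
    (hPkL : PkL = (1 : Matrix (Fin n) (Fin n) ℝ)
      - (chebR k c₁)⁻¹ • chebR k (c₁ • ((1 : Matrix (Fin n) (Fin n) ℝ) - c₂ • L))) :
    ∀ v : Fin n → ℝ, PkL.mulVec v = 0 ↔ ∃ a : ℝ, v = fun _ => a :=
  stmt6_general L hsymm hker lam2 lamn h2 h2n heig c₁ c₂ hc₁ hc₂ k hk PkL hPkL
end

section
/- Let Lap be the Laplacian of a connected graph with eigenvalues 0 = λ_1 < λ_2 ≤ ... ≤ λ_n, λ_2 < λ_n, and let c_1 = (1 + λ_2/λ_n)/(1 − λ_2/λ_n), c_2 = 2/((1 + λ_2/λ_n)λ_n). Then the condition number of P_k(c_2·Lap) restricted to (span{1_n})^⊥, namely (max over nonzero eigenvalues of P_k(c_2 Lap))/(min over nonzero eigenvalues), is at most (1 + 1/T_k(c_1))/(1 − 1/T_k(c_1)). -/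
open Polynomial Polynomial.Chebyshev Set Matrix

theorem chebR_eq_aeval_T {R A : Type*} [CommRing R] [Ring A] [Algebra R A] :
    ∀ (k : ℕ) (x : A), chebR k x = aeval x (T R (k : ℤ))
  | 0, x => by simp [chebR]
  | 1, x => by simp [chebR]
  | k + 2, x => by
    rw [chebR, chebR_eq_aeval_T (R := R) (k + 1), chebR_eq_aeval_T (R := R) k]
    push_cast
    simp [T_add_two, mul_assoc, map_ofNat]

theorem chebR_eq_eval_T (k : ℕ) (x : ℝ) : chebR k x = (T ℝ k).eval x := by
  simp [chebR_eq_aeval_T (R := ℝ)]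

theorem Matrix.mem_spectrum_iff_exists_mulVec_eq_smul {ι K : Type*} [Fintype ι] [DecidableEq ι]
    [Field K] {A : Matrix ι ι K} {μ : K} :
    μ ∈ spectrum K A ↔ ∃ v : ι → K, v ≠ 0 ∧ A *ᵥ v = μ • v := by
  rw [← spectrum_toLin', ← Module.End.hasEigenvalue_iff_mem_spectrum]
  refine ⟨fun h => ?_, fun ⟨v, hv, hAv⟩ => ?_⟩
  · obtain ⟨v, hv⟩ := h.exists_hasEigenvector
    exact ⟨v, hv.2, hv.apply_eq_smul⟩
  · exact Module.End.hasEigenvalue_of_hasEigenvector ⟨Module.End.mem_eigenspace_iff.mpr hAv, hv⟩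

theorem spectrum_aeval_eq_image {A : Type*} [Ring A] [StarRing A] [Algebra ℝ A] [TopologicalSpace A]
    [ContinuousFunctionalCalculus ℝ A IsSelfAdjoint] {a : A} (ha : IsSelfAdjoint a) (p : ℝ[X]) :
    spectrum ℝ (aeval a p) = (fun x => p.eval x) '' spectrum ℝ a := by
  rw [← cfc_polynomial p a, cfc_map_spectrum p.eval a]

noncomputable def chebyshevFilter (k : ℕ) (c : ℝ) : ℝ[X] :=
  1 - C ((T ℝ k).eval c)⁻¹ * (T ℝ k).comp (C c * (1 - X))

theorem eval_chebyshevFilter (k : ℕ) (c x : ℝ) :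
    (chebyshevFilter k c).eval x = 1 - (T ℝ k).eval (c * (1 - x)) / (T ℝ k).eval c := by
  simp [chebyshevFilter, div_eq_inv_mul]

theorem one_sub_smul_chebR_eq_aeval {A : Type*} [Ring A] [Algebra ℝ A] (k : ℕ) (c : ℝ) (a : A) :
    1 - ((T ℝ k).eval c)⁻¹ • chebR k (c • (1 - a)) = aeval a (chebyshevFilter k c) := by
  simp [chebyshevFilter, chebR_eq_aeval_T (R := ℝ), aeval_comp, Algebra.smul_def]

theorem eval_chebyshevFilter_zero {k : ℕ} {c : ℝ} (h : (T ℝ k).eval c ≠ 0) :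
    (chebyshevFilter k c).eval 0 = 0 := by
  simp [eval_chebyshevFilter, h]

theorem eval_chebyshevFilter_mem_Icc {k : ℕ} {c t : ℝ} (hc : 0 < c) (hT : 0 < (T ℝ k).eval c)
    (ht : t ∈ Icc (1 - c⁻¹) (1 + c⁻¹)) :
    (chebyshevFilter k c).eval t ∈ Icc (1 - 1 / (T ℝ k).eval c) (1 + 1 / (T ℝ k).eval c) := by
  have hct : |c * (1 - t)| ≤ 1 := by
    rw [abs_le]
    obtain ⟨h1, h2⟩ := ht
    constructor <;> nlinarith [mul_inv_cancel₀ hc.ne']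
  have hTt := abs_le.mp (abs_eval_T_real_le_one k hct)
  have h1 := div_le_div_of_nonneg_right hTt.1 hT.le
  have h2 := div_le_div_of_nonneg_right hTt.2 hT.le
  rw [neg_div] at h1
  rw [eval_chebyshevFilter]
  constructor <;> linarith

theorem two_div_add_mul_mem_Icc {a b ρ : ℝ} (ha : 0 ≤ a) (hab : a < b) (hρ : ρ ∈ Icc a b) :
    2 / (b + a) * ρ ∈ Icc (1 - ((b + a) / (b - a))⁻¹) (1 + ((b + a) / (b - a))⁻¹) := by
  have hba : 0 < b + a := by linarith
  have hlo : 1 - (b - a) / (b + a) = 2 / (b + a) * a := by field_simp; ring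
  have hhi : 1 + (b - a) / (b + a) = 2 / (b + a) * b := by field_simp; ring
  rw [inv_div, hlo, hhi]
  exact ⟨by gcongr; exact hρ.1, by gcongr; exact hρ.2⟩

theorem le_div_mul_of_le_one_add {ε μ ν : ℝ} (hε₀ : 0 ≤ ε) (hε₁ : ε < 1) (hμ : μ ≤ 1 + ε)
    (hν : 1 - ε ≤ ν) : μ ≤ (1 + ε) / (1 - ε) * ν :=
  calc μ ≤ 1 + ε := hμ
    _ = (1 + ε) / (1 - ε) * (1 - ε) := by rw [div_mul_cancel₀ _ (by linarith)]
    _ ≤ (1 + ε) / (1 - ε) * ν := by gcongr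

theorem stmt16_general {n : ℕ} (Lap : Matrix (Fin n) (Fin n) ℝ)
    (hsymm : Lap.IsSymm)
    (lam2 lamn : ℝ) (h2 : 0 < lam2) (h2n : lam2 < lamn)
    (heig : ∀ μ : ℝ, (∃ v : Fin n → ℝ, v ≠ 0 ∧ Lap.mulVec v = μ • v) →
      μ = 0 ∨ (lam2 ≤ μ ∧ μ ≤ lamn))
    (c₁ c₂ : ℝ)
    (hc₁ : c₁ = (1 + lam2 / lamn) / (1 - lam2 / lamn))
    (hc₂ : c₂ = 2 / ((1 + lam2 / lamn) * lamn))
    (k : ℕ) (hk : 1 ≤ k)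
    (PkL : Matrix (Fin n) (Fin n) ℝ)
    (hPkL : PkL = (1 : Matrix (Fin n) (Fin n) ℝ)
      - (chebR k c₁)⁻¹ • chebR k (c₁ • ((1 : Matrix (Fin n) (Fin n) ℝ) - c₂ • Lap))) :
    ∀ μ ν : ℝ,
      (∃ v : Fin n → ℝ, v ≠ 0 ∧ PkL.mulVec v = μ • v) → μ ≠ 0 →
      (∃ w : Fin n → ℝ, w ≠ 0 ∧ PkL.mulVec w = ν • w) → ν ≠ 0 →
      μ ≤ ((1 + 1 / chebR k c₁) / (1 - 1 / chebR k c₁)) * ν := by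
  simp only [chebR_eq_eval_T] at hPkL ⊢
  have hlamn : 0 < lamn := h2.trans h2n
  replace hc₁ : c₁ = (lamn + lam2) / (lamn - lam2) := by
    rw [hc₁]; field_simp
  replace hc₂ : c₂ = 2 / (lamn + lam2) := by
    rw [hc₂]; field_simp
  have hc₁_gt : 1 < c₁ := by
    rw [hc₁, one_lt_div (by linarith)]; linarith
  have hT : 1 < (T ℝ k).eval c₁ := one_lt_eval_T_real (by omega) hc₁_gt
  have hspec : ∀ μ ∈ spectrum ℝ PkL, μ ≠ 0 →
      μ ∈ Icc (1 - 1 / (T ℝ k).eval c₁) (1 + 1 / (T ℝ k).eval c₁) := by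
    have hLap : IsSelfAdjoint Lap := isHermitian_iff_isSymm.mpr hsymm
    rw [hPkL, one_sub_smul_chebR_eq_aeval,
      show c₂ • Lap = aeval Lap (C c₂ * X) by simp [Algebra.smul_def], ← aeval_comp,
      spectrum_aeval_eq_image hLap]
    rintro _ ⟨ρ, hρ, rfl⟩ hne
    simp only [eval_comp, eval_mul, eval_C, eval_X] at hne ⊢
    rcases heig ρ (mem_spectrum_iff_exists_mulVec_eq_smul.mp hρ) with rfl | hρ_Icc
    · exact absurd (eval_chebyshevFilter_zero (by positivity)) (by simpa using hne)
    · refine eval_chebyshevFilter_mem_Icc (by linarith) (by linarith) ?_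
      rw [hc₁, hc₂]
      exact two_div_add_mul_mem_Icc h2.le h2n hρ_Icc
  rintro μ ν hμ hμ₀ hν hν₀
  exact le_div_mul_of_le_one_add (by positivity) ((div_lt_one (by linarith)).mpr hT)
    (hspec μ (mem_spectrum_iff_exists_mulVec_eq_smul.mpr hμ) hμ₀).2
    (hspec ν (mem_spectrum_iff_exists_mulVec_eq_smul.mpr hν) hν₀).1

/-- With Lap a connected-graph Laplacian whose nonzero eigenvalues lie in
[λ₂, λₙ] (0 < λ₂ < λₙ), c₁ = (1 + λ₂/λₙ)/(1 − λ₂/λₙ), c₂ = 2/((1 + λ₂/λₙ)λₙ), the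
condition number of P_k(c₂·Lap) on (span{1ₙ})^⊥, i.e. the ratio of any two nonzero
eigenvalues, is at most (1 + 1/T_k(c₁))/(1 − 1/T_k(c₁)). -/
theorem stmt16 {n : ℕ} (Lap : Matrix (Fin n) (Fin n) ℝ)
    (hsymm : Lap.IsSymm) (hpsd : Lap.PosSemidef)
    (hker : ∀ v : Fin n → ℝ, Lap.mulVec v = 0 ↔ ∃ a : ℝ, v = fun _ => a)
    (lam2 lamn : ℝ) (h2 : 0 < lam2) (h2n : lam2 < lamn)
    (heig : ∀ μ : ℝ, (∃ v : Fin n → ℝ, v ≠ 0 ∧ Lap.mulVec v = μ • v) →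
      μ = 0 ∨ (lam2 ≤ μ ∧ μ ≤ lamn))
    (c₁ c₂ : ℝ)
    (hc₁ : c₁ = (1 + lam2 / lamn) / (1 - lam2 / lamn))
    (hc₂ : c₂ = 2 / ((1 + lam2 / lamn) * lamn))
    (k : ℕ) (hk : 1 ≤ k)
    (PkL : Matrix (Fin n) (Fin n) ℝ)
    (hPkL : PkL = (1 : Matrix (Fin n) (Fin n) ℝ)
      - (chebR k c₁)⁻¹ • chebR k (c₁ • ((1 : Matrix (Fin n) (Fin n) ℝ) - c₂ • Lap))) :
    ∀ μ ν : ℝ,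
      (∃ v : Fin n → ℝ, v ≠ 0 ∧ PkL.mulVec v = μ • v) → μ ≠ 0 →
      (∃ w : Fin n → ℝ, w ≠ 0 ∧ PkL.mulVec w = ν • w) → ν ≠ 0 →
      μ ≤ ((1 + 1 / chebR k c₁) / (1 - 1 / chebR k c₁)) * ν :=
  stmt16_general Lap hsymm lam2 lamn h2 h2n heig c₁ c₂ hc₁ hc₂ k hk PkL hPkL
end
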